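/- For ε ∈ (0,1), let (A,B,C,D) be binary random variables with joint distribution P(A=0,B=0,C=0,D=1) = P(A=0,B=1,C=0,D=0) = P(A=1,B=0,C=0,D=1) = P(A=1,B=1,C=0,D=1) = (1-ε)/4 and P(A=1,B=0,C=1,D=1) = ε. Then I(C:D|A) = 0, I(C:D|B) = 0, and I(A:B|C) = 0. -/

import Mathlib

open scoped BigOperators Classical

noncomputable section

/-- `p` is a probability mass function on the finite type `Ω`. -/
def IsPMF {Ω : Type*} [Fintype Ω] (p : Ω → ℝ) : Prop :=
  (∀ ω, 0 ≤ p ω) ∧ ∑ ω, p ω = 1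

/-- Probability of the event `X = s` under `p`. -/
def prOf {Ω S : Type*} [Fintype Ω] [DecidableEq S] (p : Ω → ℝ) (X : Ω → S) (s : S) : ℝ :=
  ∑ ω ∈ Finset.univ.filter (fun ω => X ω = s), p ω

/-- Shannon entropy (in bits) of the random variable `X` under the pmf `p`. -/
def ent {Ω S : Type*} [Fintype Ω] [Fintype S] [DecidableEq S] (p : Ω → ℝ) (X : Ω → S) : ℝ :=
  - ∑ s : S, prOf p X s * Real.logb 2 (prOf p X s)

/-- Mutual information `I(X:Y) = H(X) + H(Y) - H(X,Y)`. -/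
def mi {Ω S T : Type*} [Fintype Ω] [Fintype S] [Fintype T] [DecidableEq S] [DecidableEq T]
    (p : Ω → ℝ) (X : Ω → S) (Y : Ω → T) : ℝ :=
  ent p X + ent p Y - ent p (fun ω => (X ω, Y ω))

/-- Conditional mutual information `I(X:Y|Z) = H(X,Z) + H(Y,Z) - H(X,Y,Z) - H(Z)`. -/
def cmi {Ω S T U : Type*} [Fintype Ω] [Fintype S] [Fintype T] [Fintype U]
    [DecidableEq S] [DecidableEq T] [DecidableEq U]
    (p : Ω → ℝ) (X : Ω → S) (Y : Ω → T) (Z : Ω → U) : ℝ :=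
  ent p (fun ω => (X ω, Z ω)) + ent p (fun ω => (Y ω, Z ω))
    - ent p (fun ω => (X ω, Y ω, Z ω)) - ent p Z

/-- Conditional entropy `H(X|Y) = H(X,Y) - H(Y)`. -/
def condEnt {Ω S T : Type*} [Fintype Ω] [Fintype S] [Fintype T] [DecidableEq S] [DecidableEq T]
    (p : Ω → ℝ) (X : Ω → S) (Y : Ω → T) : ℝ :=
  ent p (fun ω => (X ω, Y ω)) - ent p Y

/-- The four coordinate random variables on `Bool × Bool × Bool × Bool`. -/
def vA : Bool × Bool × Bool × Bool → Bool := fun ω => ω.1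
def vB : Bool × Bool × Bool × Bool → Bool := fun ω => ω.2.1
def vC : Bool × Bool × Bool × Bool → Bool := fun ω => ω.2.2.1
def vD : Bool × Bool × Bool × Bool → Bool := fun ω => ω.2.2.2

/-- The witness distribution of Theorem 3(a). -/
def p10 (ε : ℝ) : Bool × Bool × Bool × Bool → ℝ := fun ω =>
  if ω = (false, false, false, true) then (1 - ε) / 4
  else if ω = (false, true, false, false) then (1 - ε) / 4
  else if ω = (true, false, false, true) then (1 - ε) / 4
  else if ω = (true, true, false, true) then (1 - ε) / 4
  else if ω = (true, false, true, true) then ε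
  else 0

/-!
Writing each entropy as the expectation of `-log` of a marginal, `I(X:Y|Z)` becomes the
expectation of `log (P(x,y,z) P(z) / (P(x,z) P(y,z)))`, which vanishes on the support as soon as
`P(x,y,z) P(z) = P(x,z) P(y,z)` for all `x, y, z`. For `p10 ε` this factorization is a finite check:
given `A` (or `B`) one of `C`, `D` is constant, and given `C` the pair `(A, B)` is either uniform
on four points or constant.
-/

section

variable {Ω S T U : Type*} [Fintype Ω] [DecidableEq S] [DecidableEq T] [DecidableEq U]

theorem sum_prOf_mul_eq_sum [Fintype S] (p : Ω → ℝ) (X : Ω → S) (f : ℝ → ℝ) :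
    ∑ s : S, prOf p X s * f (prOf p X s) = ∑ ω, p ω * f (prOf p X (X ω)) := by
  rw [← Finset.sum_fiberwise Finset.univ X]
  refine Finset.sum_congr rfl fun s _ => (Finset.sum_mul _ _ _).trans ?_
  refine Finset.sum_congr rfl fun ω hω => ?_
  rw [(Finset.mem_filter.1 hω).2]

theorem ent_eq_neg_sum [Fintype S] (p : Ω → ℝ) (X : Ω → S) :
    ent p X = -∑ ω, p ω * Real.logb 2 (prOf p X (X ω)) := by
  rw [ent, sum_prOf_mul_eq_sum]

theorem prOf_pos {p : Ω → ℝ} (hp : ∀ ω, 0 ≤ p ω) (X : Ω → S) {ω : Ω} (hω : 0 < p ω) :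
    0 < prOf p X (X ω) :=
  hω.trans_le (Finset.single_le_sum (fun ω _ => hp ω) (by simp))

def CondIndep (p : Ω → ℝ) (X : Ω → S) (Y : Ω → T) (Z : Ω → U) : Prop :=
  ∀ x y z, prOf p (fun ω => (X ω, Y ω, Z ω)) (x, y, z) * prOf p Z z =
    prOf p (fun ω => (X ω, Z ω)) (x, z) * prOf p (fun ω => (Y ω, Z ω)) (y, z)

theorem cmi_eq_zero_of_condIndep [Fintype S] [Fintype T] [Fintype U] {p : Ω → ℝ}
    (hp : ∀ ω, 0 ≤ p ω) {X : Ω → S} {Y : Ω → T} {Z : Ω → U} (h : CondIndep p X Y Z) :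
    cmi p X Y Z = 0 := by
  set XYZ := fun ω => (X ω, Y ω, Z ω)
  set XZ := fun ω => (X ω, Z ω)
  set YZ := fun ω => (Y ω, Z ω)
  calc cmi p X Y Z
      = ∑ ω, p ω * (Real.logb 2 (prOf p XYZ (XYZ ω)) + Real.logb 2 (prOf p Z (Z ω))
          - (Real.logb 2 (prOf p XZ (XZ ω)) + Real.logb 2 (prOf p YZ (YZ ω)))) := by
        simp only [cmi, ent_eq_neg_sum, mul_add, mul_sub, Finset.sum_add_distrib,
          Finset.sum_sub_distrib]
        ring
    _ = 0 := Finset.sum_eq_zero fun ω _ => by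
        obtain hzero | hpos := (hp ω).eq_or_lt
        · rw [← hzero, zero_mul]
        rw [← Real.logb_mul (prOf_pos hp XYZ hpos).ne' (prOf_pos hp Z hpos).ne',
          ← Real.logb_mul (prOf_pos hp XZ hpos).ne' (prOf_pos hp YZ hpos).ne', h, sub_self,
          mul_zero]

end

theorem p10_nonneg {ε : ℝ} (h0 : 0 ≤ ε) (h1 : ε ≤ 1) (ω : Bool × Bool × Bool × Bool) :
    0 ≤ p10 ε ω := by
  unfold p10
  split_ifs <;> linarith

theorem p10_condIndep (ε : ℝ) :
    CondIndep (p10 ε) vC vD vA ∧ CondIndep (p10 ε) vC vD vB ∧ CondIndep (p10 ε) vA vB vC := by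
  refine ⟨?_, ?_, ?_⟩ <;> intro x y z <;>
    simp only [prOf, Finset.sum_filter, Fintype.sum_prod_type, Fintype.sum_bool] <;>
    cases x <;> cases y <;> cases z <;> norm_num [p10, vA, vB, vC, vD] <;> ring

theorem p10_conditional_independences (ε : ℝ) (h0 : 0 < ε) (h1 : ε < 1) :
    cmi (p10 ε) vC vD vA = 0 ∧ cmi (p10 ε) vC vD vB = 0 ∧
      cmi (p10 ε) vA vB vC = 0 := by
  have hp := p10_nonneg h0.le h1.le
  obtain ⟨hA, hB, hC⟩ := p10_condIndep ε
  exact ⟨cmi_eq_zero_of_condIndep hp hA, cmi_eq_zero_of_condIndep hp hB,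
    cmi_eq_zero_of_condIndep hp hC⟩

end
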